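/- arXiv:2301.07003 — 3 statements merged into one kernel-verified Lean document; each statement's English description precedes it below -/
import Mathlib

section
/- Let T : M_n → M_n be a positive linear map that is trace preserving (or, alternatively, unital, i.e. T(I) = I). If λ ∈ ℂ with |λ| = 1 is an eigenvalue of T, then ker(T − λI)² = ker(T − λI); that is, the geometric multiplicity of λ equals its algebraic multiplicity and all Jordan blocks of T for λ are one-dimensional. -/
open Matrix
open scoped ComplexOrder

noncomputable section

/-- The algebra of `n × n` complex matrices. -/
abbrev Mn (n : ℕ) : Type := Matrix (Fin n) (Fin n) ℂ

/-- The map `X ↦ Q X Q`. -/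
def sandwich {n : ℕ} (Q : Mn n) : Module.End ℂ (Mn n) :=
  (LinearMap.mulLeft ℂ Q).comp (LinearMap.mulRight ℂ Q)

/-- The sum of the two components of a pair. -/
def sumPair (n : ℕ) : (Mn n × Mn n) →ₗ[ℂ] Mn n :=
  LinearMap.fst ℂ (Mn n) (Mn n) + LinearMap.snd ℂ (Mn n) (Mn n)

/-- The QMC `Λ_{T,V}` induced by the channel `T` and the subspace `V` (with orthogonal
projection `P` onto `V` and `Q = I − P`):
`Λ(X₁,X₂) = ((I−ℚ)(T(X₁+X₂)), ℚ(T(X₁+X₂)))` where `ℚ(Y) = QYQ`. -/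
def Lam {n : ℕ} (T : Module.End ℂ (Mn n)) (Q : Mn n) : Module.End ℂ (Mn n × Mn n) :=
  LinearMap.prod
    (((1 : Module.End ℂ (Mn n)) - sandwich Q) ∘ₗ (T ∘ₗ sumPair n))
    ((sandwich Q) ∘ₗ (T ∘ₗ sumPair n))

/-- `ℙ₁(X₁,X₂) = (X₁,0)`. -/
def proj1 (n : ℕ) : Module.End ℂ (Mn n × Mn n) :=
  (LinearMap.inl ℂ (Mn n) (Mn n)).comp (LinearMap.fst ℂ (Mn n) (Mn n))

/-- `ℙ₂(X₁,X₂) = (0,X₂)`. -/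
def proj2 (n : ℕ) : Module.End ℂ (Mn n × Mn n) :=
  (LinearMap.inr ℂ (Mn n) (Mn n)).comp (LinearMap.snd ℂ (Mn n) (Mn n))

/-- The block-diagonal part `S_d = diag(S₁₁,S₂₂)` of a map on `M_n ⊕ M_n`. -/
def diagPart {n : ℕ} (S : Module.End ℂ (Mn n × Mn n)) : Module.End ℂ (Mn n × Mn n) :=
  proj1 n * S * proj1 n + proj2 n * S * proj2 n

/-- The map `E(X₁,X₂) = (X₁+X₂, X₁+X₂)`. -/
def Emap (n : ℕ) : Module.End ℂ (Mn n × Mn n) :=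
  LinearMap.prod (sumPair n) (sumPair n)

/-- The map `Θ_W(X₁,X₂) = Tr(X₁+X₂)·W`. -/
def Theta {n : ℕ} (W : Mn n × Mn n) : Module.End ℂ (Mn n × Mn n) :=
  ((Matrix.traceLinearMap (Fin n) ℂ ℂ) ∘ₗ sumPair n).smulRight W

/-- The mean hitting time `τ(ρ → V) = Σ_{r ≥ 1} r·Tr(ℙT(ℚT)^{r−1} ρ)`. -/
def tau {n : ℕ} (T : Module.End ℂ (Mn n)) (P Q : Mn n) (ρ : Mn n) : ℂ :=
  ∑' r : ℕ, ((r : ℂ) + 1) * ((sandwich P * T * (sandwich Q * T) ^ r) ρ).trace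

/-- The pure state `ρ_φ = |φ⟩⟨φ|`. -/
def rhoOf {n : ℕ} (φ : Fin n → ℂ) : Mn n := Matrix.vecMulVec φ (star φ)

/-- A positive map on `M_n`. -/
def IsPosMap {n : ℕ} (T : Module.End ℂ (Mn n)) : Prop :=
  ∀ X : Mn n, X.PosSemidef → (T X).PosSemidef

/-- A trace-preserving map on `M_n`. -/
def IsTracePreserving {n : ℕ} (T : Module.End ℂ (Mn n)) : Prop :=
  ∀ X : Mn n, (T X).trace = X.trace

/-- A quantum channel: a completely positive trace-preserving map, given by a Kraus
decomposition `T(X) = Σᵢ Vᵢ X Vᵢ*` with `Σᵢ Vᵢ* Vᵢ = I`. -/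
def IsChannel {n : ℕ} (T : Module.End ℂ (Mn n)) : Prop :=
  ∃ (k : ℕ) (V : Fin k → Mn n),
    (∀ X : Mn n, T X = ∑ i, V i * X * (V i)ᴴ) ∧ (∑ i, (V i)ᴴ * V i = 1)

/-- Irreducibility of a positive map on `M_n`: the only orthogonal projections `P` with
`T(P M_n P) ⊆ P M_n P` are `P = 0` and `P = I`. -/
def IsIrreducibleMap {n : ℕ} (T : Module.End ℂ (Mn n)) : Prop :=
  ∀ P : Mn n, P.IsHermitian → P * P = P →
    (∀ X : Mn n, ∃ Y : Mn n, T (P * X * P) = P * Y * P) → P = 0 ∨ P = 1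

/-!
The powers of a positive map `T` that is trace preserving or unital are uniformly bounded. In the
operator norm, a positive matrix `P` satisfies `‖P‖ ≤ tr P`, which bounds `‖T^k P‖` by `tr P` in the
trace-preserving case, while `P ≤ ‖P‖ • 1` bounds it by `‖P‖` in the unital case; positive
matrices span `M_n`. A Jordan block of size two for `λ` would instead make
`T^(k+1) x = λ^(k+1) x + (k+1) λ^k (T - λ) x` grow linearly in `k` when `|λ| = 1`.
-/

section BoundedOrbits

variable {𝕜 E : Type*} [RCLike 𝕜] [NormedAddCommGroup E] [NormedSpace 𝕜 E]

def Module.End.boundedOrbits (f : Module.End 𝕜 E) : Submodule 𝕜 E where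
  carrier := {x | ∃ C, ∀ k : ℕ, ‖(f ^ k) x‖ ≤ C}
  zero_mem' := ⟨0, fun k => by simp⟩
  add_mem' := by
    rintro x y ⟨C, hC⟩ ⟨D, hD⟩
    refine ⟨C + D, fun k => ?_⟩
    rw [map_add]
    exact (norm_add_le _ _).trans (add_le_add (hC k) (hD k))
  smul_mem' := by
    rintro c x ⟨C, hC⟩
    refine ⟨‖c‖ * C, fun k => ?_⟩
    rw [map_smul, norm_smul]
    exact mul_le_mul_of_nonneg_left (hC k) (norm_nonneg c)

namespace Module.End

variable (f : Module.End 𝕜 E) {μ : 𝕜} {x : E}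

lemma pow_succ_apply_of_mem_ker_sq_sub_smul (hx : x ∈ LinearMap.ker ((f - μ • 1) ^ 2))
    (k : ℕ) : (f ^ (k + 1)) x = μ ^ (k + 1) • x + (((k : 𝕜) + 1) * μ ^ k) • (f - μ • 1) x := by
  have hfx : f x = μ • x + (f - μ • 1) x := by simp
  have hfy : f ((f - μ • 1) x) = μ • (f - μ • 1) x := by
    rw [LinearMap.mem_ker, pow_two, mul_apply] at hx
    simpa [sub_eq_zero] using hx
  induction k with
  | zero => rw [zero_add, pow_one, pow_one, hfx]; simp
  | succ k ih =>
    rw [pow_succ', mul_apply, ih, map_add, map_smul, map_smul, hfx, hfy]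
    push_cast
    module

lemma mem_ker_sub_smul_of_mem_ker_sq_sub_smul (hμ : ‖μ‖ = 1) (hbdd : x ∈ f.boundedOrbits)
    (hx : x ∈ LinearMap.ker ((f - μ • 1) ^ 2)) : x ∈ LinearMap.ker (f - μ • 1) := by
  obtain ⟨C, hC⟩ := hbdd
  set y := (f - μ • 1) x
  have hgrowth (k : ℕ) : ((k : ℝ) + 1) * ‖y‖ ≤ C + ‖x‖ := by
    have h := f.pow_succ_apply_of_mem_ker_sq_sub_smul hx k
    rw [← sub_eq_iff_eq_add'] at h
    calc ((k : ℝ) + 1) * ‖y‖ = ‖(((k : 𝕜) + 1) * μ ^ k) • y‖ := by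
          rw [norm_smul, norm_mul, norm_pow, hμ, one_pow, mul_one]
          norm_cast
      _ ≤ ‖(f ^ (k + 1)) x‖ + ‖μ ^ (k + 1) • x‖ := h ▸ norm_sub_le _ _
      _ ≤ C + ‖x‖ := by
          rw [norm_smul, norm_pow, hμ, one_pow, one_mul]
          exact add_le_add (hC _) le_rfl
  rw [LinearMap.mem_ker]
  by_contra hy
  obtain ⟨k, hk⟩ := exists_nat_gt ((C + ‖x‖) / ‖y‖)
  rw [div_lt_iff₀ (norm_pos_iff.mpr hy)] at hk
  nlinarith [hgrowth k, norm_nonneg y]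

theorem ker_sq_sub_smul_eq_of_boundedOrbits_eq_top (hμ : ‖μ‖ = 1) (hbdd : f.boundedOrbits = ⊤) :
    LinearMap.ker ((f - μ • 1) ^ 2) = LinearMap.ker (f - μ • 1) := by
  refine le_antisymm (fun x hx => f.mem_ker_sub_smul_of_mem_ker_sq_sub_smul hμ
    (hbdd ▸ Submodule.mem_top) hx) ?_
  rw [pow_two, Module.End.mul_eq_comp]
  exact LinearMap.ker_le_ker_comp _ _

end Module.End

end BoundedOrbits

section Matrix

open scoped MatrixOrder Matrix.Norms.L2Operator

lemma Matrix.PosSemidef.norm_le_re_trace {m : Type*} [Fintype m] [DecidableEq m]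
    {A : Matrix m m ℂ} (hA : A.PosSemidef) : ‖A‖ ≤ A.trace.re := by
  have htrace : A.trace.re = ∑ i, hA.1.eigenvalues i := by
    simp [hA.1.trace_eq_sum_eigenvalues]
  have htrace_nonneg : 0 ≤ A.trace.re :=
    htrace ▸ Finset.sum_nonneg fun i _ => hA.eigenvalues_nonneg i
  rw [CStarAlgebra.norm_le_iff_le_algebraMap A htrace_nonneg hA.nonneg,
    le_algebraMap_iff_spectrum_le hA.1.isSelfAdjoint,
    hA.1.spectrum_real_eq_range_eigenvalues, htrace]
  rintro _ ⟨i, rfl⟩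
  exact Finset.single_le_sum (fun j _ => hA.eigenvalues_nonneg j) (Finset.mem_univ i)

variable {n : ℕ} {T : Module.End ℂ (Mn n)}

lemma IsPosMap.pow (hT : IsPosMap T) (k : ℕ) : IsPosMap (T ^ k) := by
  induction k with
  | zero => exact fun X hX => hX
  | succ k ih => exact fun X hX => ih _ (hT X hX)

lemma IsTracePreserving.pow (hT : IsTracePreserving T) (k : ℕ) : IsTracePreserving (T ^ k) := by
  induction k with
  | zero => exact fun X => rfl
  | succ k ih => exact fun X => (ih _).trans (hT X)

lemma IsPosMap.monotone (hT : IsPosMap T) : Monotone T := fun X Y hXY => by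
  simpa [Matrix.le_iff] using hT _ hXY

lemma IsPosMap.norm_apply_le_of_map_one (hT : IsPosMap T) (h1 : T 1 = 1) {P : Mn n}
    (hP : P.PosSemidef) : ‖T P‖ ≤ ‖P‖ := by
  rw [CStarAlgebra.norm_le_iff_le_algebraMap _ (norm_nonneg P) (hT P hP).nonneg]
  calc T P ≤ T (algebraMap ℝ (Mn n) ‖P‖) := hT.monotone (IsSelfAdjoint.le_algebraMap_norm_self hP.1)
    _ = algebraMap ℝ (Mn n) ‖P‖ := by
      rw [Algebra.algebraMap_eq_smul_one, LinearMap.map_smul_of_tower, h1]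

lemma IsPosMap.norm_apply_le_of_isTracePreserving (hT : IsPosMap T) (htr : IsTracePreserving T)
    {P : Mn n} (hP : P.PosSemidef) : ‖T P‖ ≤ P.trace.re :=
  htr P ▸ (hT P hP).norm_le_re_trace

theorem IsPosMap.boundedOrbits_eq_top (hT : IsPosMap T)
    (htr_or_unital : IsTracePreserving T ∨ T 1 = 1) : T.boundedOrbits = ⊤ := by
  rw [eq_top_iff, ← CStarAlgebra.span_nonneg, Submodule.span_le]
  intro P hP
  rcases htr_or_unital with htr | h1
  · exact ⟨P.trace.re, fun k =>
      (hT.pow k).norm_apply_le_of_isTracePreserving (htr.pow k) hP.posSemidef⟩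
  · have hpow_one (k : ℕ) : (T ^ k) 1 = 1 := (T.pow_apply k 1).trans (Function.iterate_fixed h1 k)
    exact ⟨‖P‖, fun k => (hT.pow k).norm_apply_le_of_map_one (hpow_one k) hP.posSemidef⟩

end Matrix

theorem stmt7_general {n : ℕ} (T : Module.End ℂ (Mn n))
    (hTpos : IsPosMap T)
    (hTPorUnital : IsTracePreserving T ∨ T (1 : Mn n) = 1)
    (lam : ℂ) (hlam : ‖lam‖ = 1) :
    LinearMap.ker ((T - lam • 1) ^ 2) = LinearMap.ker (T - lam • 1) := by
  open scoped Matrix.Norms.L2Operator in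
  exact T.ker_sq_sub_smul_eq_of_boundedOrbits_eq_top hlam (hTpos.boundedOrbits_eq_top hTPorUnital)

/-- Trivial Jordan blocks for the peripheral spectrum. If `T` is a positive
map on `M_n` which is trace preserving or unital, and `λ` is an eigenvalue of `T` with
`|λ| = 1`, then `ker(T − λI)² = ker(T − λI)`. -/
theorem stmt7 {n : ℕ} (T : Module.End ℂ (Mn n))
    (hTpos : IsPosMap T)
    (hTPorUnital : IsTracePreserving T ∨ T (1 : Mn n) = 1)
    (lam : ℂ) (hlam : ‖lam‖ = 1)
    (heig : Module.End.HasEigenvalue T lam) :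
    LinearMap.ker ((T - lam • 1) ^ 2) = LinearMap.ker (T - lam • 1) :=
  stmt7_general T hTpos hTPorUnital lam hlam
end
end

section
/- Let T be a positive trace-preserving linear map on M_n, A = I − T, and A^# the group inverse of A (which exists). Then the Cesàro means (1/N)(I + T + T² + ⋯ + T^{N−1}) converge, as N → ∞, to the linear map I − A^#A. -/
open Matrix
open scoped ComplexOrder

noncomputable section

/-!
Writing `A = 1 - T` and `P = 1 - A^# A`, the identities `A A^# A = A` and `A A^# = A^# A` give
`T P = P` and `∑_{k<N} T^k = N P + (1 - T^N) A^#`, so the Cesàro means equal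
`P + (A^# - T^N A^#) / N`. A positive trace-preserving map sends a positive semidefinite `M`
to positive semidefinite matrices of the same trace, whose entries are bounded by that trace;
since positive semidefinite matrices span `M_n`, every orbit of `T` is bounded and the error
term tends to `0`.
-/

open Filter Topology

theorem geom_sum_eq_nsmul_add_of_isGroupInverse {R : Type*} [Ring R] {T B : R}
    (hB : (1 - T) * B * (1 - T) = 1 - T) (hcomm : (1 - T) * B = B * (1 - T)) (N : ℕ) :
    ∑ k ∈ Finset.range N, T ^ k = N • (1 - B * (1 - T)) + (1 - T ^ N) * B := by
  have hfix : T * (1 - B * (1 - T)) = 1 - B * (1 - T) := by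
    have : (1 - T) * (1 - B * (1 - T)) = 0 := by
      rw [mul_sub, mul_one, ← mul_assoc, hB, sub_self]
    calc T * (1 - B * (1 - T)) = 1 - B * (1 - T) - (1 - T) * (1 - B * (1 - T)) := by
          noncomm_ring
      _ = 1 - B * (1 - T) := by rw [this, sub_zero]
  have hpow (k : ℕ) : T ^ k * (1 - B * (1 - T)) = 1 - B * (1 - T) := by
    induction k with
    | zero => rw [pow_zero, one_mul]
    | succ k ih => rw [pow_succ, mul_assoc, hfix, ih]
  calc ∑ k ∈ Finset.range N, T ^ k
      = ∑ k ∈ Finset.range N, T ^ k * (1 - B * (1 - T))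
        + (∑ k ∈ Finset.range N, T ^ k) * (1 - T) * B := by
        rw [← Finset.sum_mul, mul_assoc, ← hcomm, ← mul_add, sub_add_cancel, mul_one]
    _ = N • (1 - B * (1 - T)) + (1 - T ^ N) * B := by
        simp only [hpow, Finset.sum_const, Finset.card_range, geom_sum_mul_neg]

theorem Matrix.PosSemidef.norm_apply_le_re_trace {ι 𝕜 : Type*} [Fintype ι] [RCLike 𝕜]
    {M : Matrix ι ι 𝕜} (hM : M.PosSemidef) (i j : ι) : ‖M i j‖ ≤ RCLike.re M.trace := by
  have hdet := (hM.submatrix ![i, j]).det_nonneg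
  rw [det_fin_two] at hdet
  simp only [Fin.isValue, submatrix_apply, cons_val_zero, cons_val_one] at hdet
  rw [← hM.1.apply i j, RCLike.star_def, RCLike.conj_mul, sub_nonneg] at hdet
  have hnorm : ‖M j i‖ = ‖M i j‖ := by
    rw [← hM.1.apply i j, RCLike.star_def, RCLike.norm_conj]
  rw [hnorm] at hdet
  have hdiag (k : ι) : 0 ≤ M k k ∧ M k k ≤ M.trace := ⟨hM.diag_nonneg,
    Finset.single_le_sum (f := fun l => M l l) (fun l _ => hM.diag_nonneg) (Finset.mem_univ k)⟩
  obtain ⟨t, ht0, ht⟩ := RCLike.nonneg_iff_exists_ofReal.mp hM.trace_nonneg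
  have hsq : ((‖M i j‖ ^ 2 : ℝ) : 𝕜) ≤ ((t ^ 2 : ℝ) : 𝕜) := by
    push_cast
    calc _ ≤ M i i * M j j := hdet
      _ ≤ M.trace * M.trace := mul_le_mul (hdiag i).2 (hdiag j).2 (hdiag j).1 hM.trace_nonneg
      _ = _ := by rw [← ht, sq]
  rw [RCLike.ofReal_le_ofReal] at hsq
  rw [← ht, RCLike.ofReal_re]
  exact (pow_le_pow_iff_left₀ (norm_nonneg _) ht0 two_ne_zero).mp hsq

namespace Module.End

variable {𝕜 E : Type*} [RCLike 𝕜] [NormedAddCommGroup E] [NormedSpace 𝕜 E]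

def boundedOrbits_s8 (T : Module.End 𝕜 E) : Submodule 𝕜 E where
  carrier := {x | ∃ C, ∀ N : ℕ, ‖(T ^ N) x‖ ≤ C}
  zero_mem' := ⟨0, fun N => by simp⟩
  add_mem' := by
    rintro x y ⟨C, hx⟩ ⟨D, hy⟩
    refine ⟨C + D, fun N => ?_⟩
    rw [map_add]
    exact (norm_add_le _ _).trans (add_le_add (hx N) (hy N))
  smul_mem' := by
    rintro c x ⟨C, hx⟩
    refine ⟨‖c‖ * C, fun N => ?_⟩
    rw [map_smul, norm_smul]
    exact mul_le_mul_of_nonneg_left (hx N) (norm_nonneg c)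

theorem tendsto_cesaro_of_isGroupInverse {T B : Module.End 𝕜 E}
    (hB : (1 - T) * B * (1 - T) = 1 - T) (hcomm : (1 - T) * B = B * (1 - T)) {x : E}
    (hx : B x ∈ boundedOrbits_s8 T) :
    Tendsto (fun N : ℕ => (N : 𝕜)⁻¹ • (∑ k ∈ Finset.range N, T ^ k) x) atTop
      (𝓝 ((1 - B * (1 - T)) x)) := by
  obtain ⟨C, hC⟩ := hx
  have hrem : Tendsto (fun N : ℕ => (N : 𝕜)⁻¹ • (B x - (T ^ N) (B x))) atTop (𝓝 0) :=
    tendsto_inv_atTop_nhds_zero_nat.zero_smul_isBoundedUnder_le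
      ⟨‖B x‖ + C, eventually_map.mpr (Eventually.of_forall fun N =>
        (norm_sub_le _ _).trans (add_le_add_right (hC N) _))⟩
  have hlim := (tendsto_const_nhds (x := (1 - B * (1 - T)) x)).add hrem
  rw [add_zero] at hlim
  refine hlim.congr' ?_
  filter_upwards [eventually_ne_atTop 0] with N hN
  rw [geom_sum_eq_nsmul_add_of_isGroupInverse hB hcomm, LinearMap.add_apply, smul_add,
    ← Nat.cast_smul_eq_nsmul 𝕜, LinearMap.smul_apply,
    inv_smul_smul₀ (Nat.cast_ne_zero.mpr hN)]
  simp only [LinearMap.sub_apply, one_apply, mul_apply, map_sub]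

end Module.End

open scoped MatrixOrder in
theorem Matrix.span_posSemidef {ι : Type*} [Fintype ι] :
    Submodule.span ℂ {M : Matrix ι ι ℂ | M.PosSemidef} = ⊤ := by
  classical
  simpa only [Matrix.nonneg_iff_posSemidef] using CStarAlgebra.span_nonneg (A := Matrix ι ι ℂ)

theorem IsPosMap.pow_s8 {n : ℕ} {T : Module.End ℂ (Mn n)} (hT : IsPosMap T) (N : ℕ) :
    IsPosMap (T ^ N) := by
  induction N with
  | zero => exact fun X hX => hX
  | succ N ih => exact fun X hX => ih _ (hT X hX)

theorem IsTracePreserving.pow_s8 {n : ℕ} {T : Module.End ℂ (Mn n)} (hT : IsTracePreserving T)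
    (N : ℕ) : IsTracePreserving (T ^ N) := by
  induction N with
  | zero => exact fun X => rfl
  | succ N ih => exact fun X => (ih (T X)).trans (hT X)

-- The entrywise sup norm; it induces the product topology in which `stmt8` is stated.
attribute [local instance] Matrix.normedAddCommGroup Matrix.normedSpace

theorem Matrix.PosSemidef.norm_le_re_trace_s8 {ι 𝕜 : Type*} [Fintype ι] [RCLike 𝕜]
    {M : Matrix ι ι 𝕜} (hM : M.PosSemidef) : ‖M‖ ≤ RCLike.re M.trace :=
  (Matrix.norm_le_iff (RCLike.nonneg_iff.mp hM.trace_nonneg).1).mpr hM.norm_apply_le_re_trace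

theorem boundedOrbits_eq_top_of_isPosMap {n : ℕ} {T : Module.End ℂ (Mn n)}
    (hTpos : IsPosMap T) (hTtr : IsTracePreserving T) : T.boundedOrbits_s8 = ⊤ := by
  rw [eq_top_iff, ← Matrix.span_posSemidef, Submodule.span_le]
  intro M hM
  refine ⟨RCLike.re M.trace, fun N => ?_⟩
  simpa only [hTtr.pow_s8 N M] using (hTpos.pow_s8 N M hM).norm_le_re_trace_s8

theorem stmt8_general {n : ℕ} (T : Module.End ℂ (Mn n))
    (hTpos : IsPosMap T) (hTtr : IsTracePreserving T)
    (A B : Module.End ℂ (Mn n)) (hA : A = 1 - T)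
    (hB1 : A * B * A = A) (hB3 : A * B = B * A) :
    ∀ X : Mn n, Filter.Tendsto
      (fun N : ℕ => (N : ℂ)⁻¹ • ((∑ k ∈ Finset.range N, T ^ k) X))
      Filter.atTop (nhds (((1 : Module.End ℂ (Mn n)) - B * A) X)) := by
  intro X
  subst hA
  have hbounded : B X ∈ T.boundedOrbits_s8 := by
    rw [boundedOrbits_eq_top_of_isPosMap hTpos hTtr]
    exact Submodule.mem_top
  exact Module.End.tendsto_cesaro_of_isGroupInverse hB1 hB3 hbounded

/-- The Cesàro means `(1/N)(I + T + ⋯ + T^{N−1})` of a positive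
trace-preserving map `T` converge to `I − A^#A`, where `A = I − T` and `A^#` is its
group inverse. (Convergence of maps on the finite-dimensional space `M_n` is stated
pointwise, which is equivalent to convergence in any norm.) -/
theorem stmt8 {n : ℕ} (T : Module.End ℂ (Mn n))
    (hTpos : IsPosMap T) (hTtr : IsTracePreserving T)
    (A B : Module.End ℂ (Mn n)) (hA : A = 1 - T)
    (hB1 : A * B * A = A) (hB2 : B * A * B = B) (hB3 : A * B = B * A) :
    ∀ X : Mn n, Filter.Tendsto
      (fun N : ℕ => (N : ℂ)⁻¹ • ((∑ k ∈ Finset.range N, T ^ k) X))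
      Filter.atTop (nhds (((1 : Module.End ℂ (Mn n)) - B * A) X)) :=
  stmt8_general T hTpos hTtr A B hA hB1 hB3
end
end

section
/- Let M and M' be quantum channels on M_n with M ergodic, i.e. M has a unique invariant state ρ_*. Then for every p ∈ (0,1], the channel M_p := pM + (1−p)M' is ergodic; moreover, denoting its unique invariant state by ρ_{*,p}, there exist π_p ∈ (0,1] and a state σ_p such that ρ_{*,p} = π_p ρ_* + (1−π_p) σ_p. -/
open Matrix
open scoped ComplexOrder

noncomputable section

/-!
An invariant state `σ` of `M_p = pM + (1-p)M'` satisfies `p M σ ≤ σ`. Hence `M` maps the corner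
`P M_n P` of the support projection `P` of `σ` into itself, and since `M` is trace preserving it
has an invariant state in that corner, which by ergodicity is `ρ_*`; so `c ρ_* ≤ σ` for some
`c > 0`. The positive and negative parts of a Hermitian `M_p`-invariant matrix are again invariant,
and they are orthogonal, so they cannot both dominate a multiple of `ρ_*`: this gives uniqueness
of the invariant state `ρ_{*,p}`, and `c ρ_* ≤ ρ_{*,p}` gives the decomposition.
-/

open scoped MatrixOrder ComplexStarModule

theorem IsStarProjection.mul_mul_eq_self_iff {R : Type*} [Ring R] [StarRing R] {P X : R}
    (hP : IsStarProjection P) (hX : IsSelfAdjoint X) : P * X * P = X ↔ (1 - P) * X = 0 := by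
  constructor
  · intro h
    rw [← h, ← mul_assoc, ← mul_assoc, hP.one_sub_mul_self, zero_mul, zero_mul]
  · intro h
    have hPX : P * X = X := by rw [sub_mul, one_mul, sub_eq_zero] at h; exact h.symm
    have hXP : X * P = X := by
      simpa [hX.star_eq, hP.isSelfAdjoint.star_eq] using congrArg star hPX
    rw [hPX, hXP]

theorem LinearMap.exists_ne_zero_apply_eq_self {K V : Type*} [Field K] [AddCommGroup V]
    [Module K V] [FiniteDimensional K V] (L : V →ₗ[K] V) (φ : V →ₗ[K] K) (hφL : φ ∘ₗ L = φ)
    (hφ : φ ≠ 0) : ∃ x, x ≠ 0 ∧ L x = x := by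
  by_contra! h
  have hinj : Function.Injective (L - 1 : Module.End K V) := by
    rw [← LinearMap.ker_eq_bot, Submodule.eq_bot_iff]
    intro x hx
    by_contra hx0
    exact h x hx0 (sub_eq_zero.mp hx)
  apply hφ
  ext v
  obtain ⟨w, rfl⟩ := LinearMap.injective_iff_surjective.mp hinj v
  rw [zero_apply, sub_apply, map_sub, Module.End.one_apply, ← comp_apply, hφL, sub_self]

theorem Submodule.exists_isSelfAdjoint_ne_zero {A : Type*} [AddCommGroup A] [Module ℂ A]
    [StarAddMonoid A] [StarModule ℂ A] (S : Submodule ℂ A) (hS : ∀ x ∈ S, star x ∈ S) {x : A}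
    (hx : x ∈ S) (hx0 : x ≠ 0) : ∃ y ∈ S, IsSelfAdjoint y ∧ y ≠ 0 := by
  by_contra! h
  have hre : (ℜ x : A) = 0 := h _ (by
    rw [realPart_apply_coe]; exact S.smul_of_tower_mem _ (S.add_mem hx (hS x hx))) (ℜ x).2
  have him : (ℑ x : A) = 0 := h _ (by
    rw [imaginaryPart_apply_coe]
    exact S.smul_mem _ (S.smul_of_tower_mem _ (S.sub_mem hx (hS x hx)))) (ℑ x).2
  exact hx0 (by rw [← realPart_add_I_smul_imaginaryPart x, hre, him, smul_zero, add_zero])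

namespace Matrix

theorem _root_.IsStarProjection.trace_ne_zero {ι : Type*} [Fintype ι] {P : Matrix ι ι ℂ}
    (hP : IsStarProjection P) (hP0 : P ≠ 0) : P.trace ≠ 0 := by
  have h := (trace_conjTranspose_mul_self_eq_zero_iff (A := P)).not.mpr hP0
  rwa [← star_eq_conjTranspose, hP.isSelfAdjoint.star_eq, hP.isIdempotentElem.eq] at h

theorem trace_re_inv_smul {ι : Type*} [Fintype ι] {X : Matrix ι ι ℂ} (hX : 0 ≤ X)
    (hX0 : X ≠ 0) : ((X.trace.re)⁻¹ • X).trace = 1 := by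
  have hpsd := nonneg_iff_posSemidef.mp hX
  set r := X.trace.re
  have htr : X.trace = (r : ℂ) :=
    Complex.ext rfl (Complex.nonneg_iff.mp hpsd.trace_nonneg).2.symm
  have hr : r ≠ 0 := fun h => hX0 (hpsd.trace_eq_zero_iff.mp (by rw [htr, h]; simp))
  rw [trace_smul, htr, Complex.real_smul, ← Complex.ofReal_mul, inv_mul_cancel₀ hr,
    Complex.ofReal_one]

variable {ι : Type*} [Fintype ι] [DecidableEq ι]

theorem trace_mul_nonneg {A B : Matrix ι ι ℂ} (hA : 0 ≤ A) (hB : 0 ≤ B) :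
    0 ≤ (A * B).trace := by
  obtain ⟨S, rfl⟩ := CStarAlgebra.nonneg_iff_eq_star_mul_self.mp hA
  rw [mul_assoc, trace_mul_comm]
  exact (nonneg_iff_posSemidef.mp (star_right_conjugate_nonneg hB S)).trace_nonneg

theorem trace_mul_le_trace_mul {A B C : Matrix ι ι ℂ} (hAB : A ≤ B) (hC : 0 ≤ C) :
    (A * C).trace ≤ (B * C).trace := by
  have := trace_mul_nonneg (sub_nonneg.mpr hAB) hC
  rwa [sub_mul, trace_sub, sub_nonneg] at this

theorem mul_eq_zero_of_trace_mul_eq_zero {A Q : Matrix ι ι ℂ} (hA : 0 ≤ A)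
    (hQ : IsStarProjection Q) (h : (Q * A).trace = 0) : Q * A = 0 := by
  obtain ⟨S, rfl⟩ := CStarAlgebra.nonneg_iff_eq_star_mul_self.mp hA
  have hSQ : S * Q = 0 := by
    rw [← trace_conjTranspose_mul_self_eq_zero_iff, ← h]
    calc ((S * Q)ᴴ * (S * Q)).trace = (Q * (star S * S) * Q).trace := by
          rw [conjTranspose_mul, ← star_eq_conjTranspose, ← star_eq_conjTranspose,
            hQ.isSelfAdjoint.star_eq]
          noncomm_ring
      _ = (Q * (star S * S)).trace := by
          rw [trace_mul_comm, ← mul_assoc, hQ.isIdempotentElem.eq]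
  have hQS : Q * star S = 0 := by simpa [hQ.isSelfAdjoint.star_eq] using congrArg star hSQ
  rw [← mul_assoc, hQS, zero_mul]

theorem mul_eq_zero_of_le {A B Q : Matrix ι ι ℂ} (hA : 0 ≤ A) (hAB : A ≤ B)
    (hQ : IsStarProjection Q) (hQB : Q * B = 0) : Q * A = 0 := by
  refine mul_eq_zero_of_trace_mul_eq_zero hA hQ (le_antisymm ?_ (trace_mul_nonneg hQ.nonneg hA))
  calc (Q * A).trace = (A * Q).trace := trace_mul_comm _ _
    _ ≤ (B * Q).trace := trace_mul_le_trace_mul hAB hQ.nonneg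
    _ = 0 := by rw [trace_mul_comm, hQB, trace_zero]

theorem mul_eq_zero_of_smul_le {σ P X : Matrix ι ι ℂ} (hP : IsStarProjection P) {c : ℝ}
    (hc : 0 < c) (hcP : c • P ≤ σ) (hσX : σ * X = 0) : P * X = 0 := by
  have hle : star X * (c • P) * X ≤ 0 := by
    simpa [mul_assoc, hσX] using star_left_conjugate_le_conjugate hcP X
  have hzero : star X * (c • P) * X = 0 :=
    le_antisymm hle (star_left_conjugate_nonneg (smul_nonneg hc.le hP.nonneg) X)
  rw [mul_smul_comm, smul_mul_assoc, smul_eq_zero_iff_right hc.ne'] at hzero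
  rw [← conjTranspose_mul_self_eq_zero, conjTranspose_mul, ← star_eq_conjTranspose,
    ← star_eq_conjTranspose, hP.isSelfAdjoint.star_eq, mul_assoc, ← mul_assoc P,
    hP.isIdempotentElem.eq, ← mul_assoc, hzero]

theorem le_trace_re_smul_one {X : Matrix ι ι ℂ} (hX : 0 ≤ X) :
    X ≤ X.trace.re • (1 : Matrix ι ι ℂ) := by
  have hpsd := nonneg_iff_posSemidef.mp hX
  rw [← Algebra.algebraMap_eq_smul_one, le_algebraMap_iff_spectrum_le,
    hpsd.1.spectrum_real_eq_range_eigenvalues]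
  rintro _ ⟨i, rfl⟩
  rw [hpsd.1.trace_eq_sum_eigenvalues, Complex.re_sum]
  simpa using Finset.single_le_sum (fun j _ => hpsd.eigenvalues_nonneg j) (Finset.mem_univ i)

theorem _root_.IsStarProjection.le_trace_re_smul {P X : Matrix ι ι ℂ} (hP : IsStarProjection P)
    (hX : 0 ≤ X) (hXP : P * X * P = X) : X ≤ X.trace.re • P := by
  have := star_left_conjugate_le_conjugate (le_trace_re_smul_one hX) P
  rwa [hP.isSelfAdjoint.star_eq, hXP, mul_smul_comm, mul_one, smul_mul_assoc,
    hP.isIdempotentElem.eq] at this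

theorem _root_.IsStarProjection.mul_posPart_mul {P δ : Matrix ι ι ℂ} (hP : IsStarProjection P)
    (hδ : IsSelfAdjoint δ) (h : P * δ * P = δ) : P * δ⁺ * P = δ⁺ := by
  rw [hP.mul_mul_eq_self_iff (CFC.posPart_nonneg δ).isSelfAdjoint]
  rw [hP.mul_mul_eq_self_iff hδ] at h
  rw [← self_mul_conjTranspose_eq_zero]
  calc (1 - P) * δ⁺ * ((1 - P) * δ⁺)ᴴ = (1 - P) * (δ⁺ * δ⁺) * (1 - P) := by
        rw [conjTranspose_mul, ← star_eq_conjTranspose, ← star_eq_conjTranspose,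
          (CFC.posPart_nonneg δ).isSelfAdjoint.star_eq, hP.one_sub.isSelfAdjoint.star_eq]
        noncomm_ring
    _ = (1 - P) * ((δ + δ⁻) * δ⁺) * (1 - P) := by
        rw [← eq_add_of_sub_eq (CFC.posPart_sub_negPart δ hδ)]
    _ = (1 - P) * δ * (δ⁺ * (1 - P)) + (1 - P) * (δ⁻ * δ⁺) * (1 - P) := by noncomm_ring
    _ = 0 := by rw [h, CFC.negPart_mul_posPart]; simp

theorem _root_.IsStarProjection.mul_negPart_mul {P δ : Matrix ι ι ℂ} (hP : IsStarProjection P)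
    (hδ : IsSelfAdjoint δ) (h : P * δ * P = δ) : P * δ⁻ * P = δ⁻ := by
  rw [← CFC.posPart_neg]
  exact hP.mul_posPart_mul hδ.neg (by rw [mul_neg, neg_mul, h])

theorem exists_isStarProjection_support {σ : Matrix ι ι ℂ} (hσ : 0 ≤ σ) :
    ∃ P : Matrix ι ι ℂ, IsStarProjection P ∧ P * σ * P = σ ∧ ∃ c : ℝ, 0 < c ∧ c • P ≤ σ := by
  set f : ℝ → ℝ := fun x => if 0 < x then 1 else 0
  have hfin : (spectrum ℝ σ).Finite := finite_real_spectrum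
  have hf : ContinuousOn f (spectrum ℝ σ) := hfin.continuousOn _
  obtain ⟨c, hc, hcle⟩ : ∃ c : ℝ, 0 < c ∧ ∀ x ∈ spectrum ℝ σ, 0 < x → c ≤ x := by
    by_cases hS : (spectrum ℝ σ ∩ Set.Ioi 0).Nonempty
    · obtain ⟨c, ⟨-, hc⟩, hmin⟩ := Set.exists_min_image _ id (hfin.inter_of_left _) hS
      exact ⟨c, hc, fun x hx hx0 => hmin x ⟨hx, hx0⟩⟩
    · exact ⟨1, one_pos, fun x hx hx0 => (hS ⟨x, hx, hx0⟩).elim⟩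
  refine ⟨cfc f σ, ⟨?_, cfc_predicate f σ⟩, ?_, c, hc, ?_⟩
  · change cfc f σ * cfc f σ = cfc f σ
    rw [← cfc_mul f f σ hf hf]
    exact cfc_congr fun x _ => by by_cases hx : 0 < x <;> simp [f, hx]
  · have hPσ : cfc f σ * σ = σ := by
      nth_rewrite 2 [← cfc_id' ℝ σ]
      nth_rewrite 3 [← cfc_id' ℝ σ]
      rw [← cfc_mul _ _ σ hf]
      refine cfc_congr fun x hx => ?_
      rcases (spectrum_nonneg_of_nonneg hσ hx).lt_or_eq with hx0 | rfl <;> simp [f, *]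
    have hσP : σ * cfc f σ = σ := by
      simpa [(IsSelfAdjoint.of_nonneg hσ).star_eq, (cfc_predicate f σ).star_eq] using
        congrArg star hPσ
    rw [hPσ, hσP]
  · rw [← cfc_smul c f σ hf]
    conv_rhs => rw [← cfc_id' ℝ σ]
    refine cfc_mono fun x hx => ?_
    by_cases hx0 : 0 < x
    · simpa [f, hx0] using hcle x hx hx0
    · simpa [f, hx0] using spectrum_nonneg_of_nonneg hσ hx

theorem exists_eq_smul_add_smul_of_smul_le {ρ ρ' : Matrix ι ι ℂ} (hρ : 0 ≤ ρ)
    (hρtr : ρ.trace = 1) (hρ'tr : ρ'.trace = 1) {c : ℝ} (hc : 0 < c) (hcρ : c • ρ ≤ ρ') :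
    ∃ c' : ℝ, 0 < c' ∧ c' ≤ 1 ∧ ∃ σ : Matrix ι ι ℂ, σ.PosSemidef ∧ σ.trace = 1 ∧
      ρ' = (c' : ℂ) • ρ + ((1 : ℂ) - (c' : ℂ)) • σ := by
  have hc1 : c ≤ 1 := by
    have := (nonneg_iff_posSemidef.mp (sub_nonneg.mpr hcρ)).trace_nonneg
    rw [trace_sub, trace_smul, hρtr, hρ'tr, Complex.real_smul, mul_one, sub_nonneg] at this
    exact_mod_cast this
  -- halving `c` keeps the weight `1 - c / 2` of the remainder positive
  have hw : 0 < 1 - c / 2 := by linarith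
  have hle : (c / 2) • ρ ≤ ρ' := (smul_le_smul_of_nonneg_right (by linarith) hρ).trans hcρ
  refine ⟨c / 2, by positivity, by linarith, (1 - c / 2)⁻¹ • (ρ' - (c / 2) • ρ),
    nonneg_iff_posSemidef.mp (smul_nonneg (inv_nonneg.mpr hw.le) (sub_nonneg.mpr hle)), ?_, ?_⟩
  · rw [trace_smul, trace_sub, trace_smul, hρtr, hρ'tr, Complex.real_smul, Complex.real_smul,
      mul_one, ← Complex.ofReal_one, ← Complex.ofReal_sub, ← Complex.ofReal_mul,
      inv_mul_cancel₀ hw.ne', Complex.ofReal_one]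
  · rw [← Complex.ofReal_one, ← Complex.ofReal_sub, Complex.coe_smul, Complex.coe_smul, smul_smul,
      mul_inv_cancel₀ hw.ne', one_smul, add_sub_cancel]

end Matrix

theorem sandwich_apply {n : ℕ} (Q X : Mn n) : sandwich Q X = Q * X * Q := (mul_assoc _ _ _).symm

theorem isPosMap_iff {n : ℕ} {T : Module.End ℂ (Mn n)} :
    IsPosMap T ↔ ∀ X, 0 ≤ X → 0 ≤ T X := by
  simp only [IsPosMap, Matrix.nonneg_iff_posSemidef]

namespace IsPosMap

variable {n : ℕ} {T : Module.End ℂ (Mn n)}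

theorem map_nonneg (hT : IsPosMap T) {X : Mn n} (hX : 0 ≤ X) : 0 ≤ T X :=
  isPosMap_iff.mp hT X hX

theorem monotone_s13 (hT : IsPosMap T) : Monotone T := fun A B h => by
  simpa using hT.map_nonneg (sub_nonneg.mpr h)

theorem map_star (hT : IsPosMap T) (X : Mn n) : T (star X) = star (T X) := by
  have hX : X ∈ Submodule.span ℂ {a : Mn n | 0 ≤ a} := by
    rw [CStarAlgebra.span_nonneg]; exact Submodule.mem_top
  induction hX using Submodule.span_induction with
  | mem a ha =>
    rw [(IsSelfAdjoint.of_nonneg ha).star_eq, (IsSelfAdjoint.of_nonneg (hT.map_nonneg ha)).star_eq]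
  | zero => simp
  | add a b _ _ ha hb => rw [star_add, map_add, map_add, star_add, ha, hb]
  | smul c a _ ha => rw [star_smul, map_smul, map_smul, star_smul, ha]

theorem map_posPart_of_map_eq_self (hT : IsPosMap T) (hTtr : IsTracePreserving T) {δ : Mn n}
    (hδ : IsSelfAdjoint δ) (hfix : T δ = δ) : T δ⁺ = δ⁺ := by
  obtain ⟨P, hP, hPδ, c, hc, hcP⟩ := Matrix.exists_isStarProjection_support (CFC.posPart_nonneg δ)
  have hPpos : P * δ⁺ = δ⁺ := by
    rw [← hPδ, ← mul_assoc, ← mul_assoc, hP.isIdempotentElem.eq]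
  have hPneg : P * δ⁻ = 0 := Matrix.mul_eq_zero_of_smul_le hP hc hcP (CFC.posPart_mul_negPart δ)
  have hPδ' : P * δ = δ⁺ := by
    conv_lhs => rw [← CFC.posPart_sub_negPart δ hδ]
    rw [mul_sub, hPpos, hPneg, sub_zero]
  have hB : 0 ≤ T δ⁺ := hT.map_nonneg (CFC.posPart_nonneg δ)
  have hC : 0 ≤ T δ⁻ := hT.map_nonneg (CFC.negPart_nonneg δ)
  have hBC : T δ⁺ - T δ⁻ = δ := by rw [← map_sub, CFC.posPart_sub_negPart δ hδ, hfix]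
  have hsum : ((1 - P) * T δ⁺).trace + (P * T δ⁻).trace = 0 := by
    have : (1 - P) * T δ⁺ + P * T δ⁻ = T δ⁺ - P * (T δ⁺ - T δ⁻) := by noncomm_ring
    rw [hBC] at this
    rw [← Matrix.trace_add, this, Matrix.trace_sub, hPδ', hTtr, sub_self]
  have h₁ := Matrix.trace_mul_nonneg hP.one_sub.nonneg hB
  have h₂ := Matrix.trace_mul_nonneg hP.nonneg hC
  have hQB : (1 - P) * T δ⁺ = 0 := Matrix.mul_eq_zero_of_trace_mul_eq_zero hB hP.one_sub
    (le_antisymm ((le_add_of_nonneg_right h₂).trans hsum.le) h₁)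
  have hPC : P * T δ⁻ = 0 := Matrix.mul_eq_zero_of_trace_mul_eq_zero hC hP
    (le_antisymm ((le_add_of_nonneg_left h₁).trans hsum.le) h₂)
  calc T δ⁺ = P * T δ⁺ := by rwa [sub_mul, one_mul, sub_eq_zero] at hQB
    _ = P * (T δ⁻ + (T δ⁺ - T δ⁻)) := by rw [add_sub_cancel]
    _ = P * T δ⁻ + P * δ := by rw [hBC, mul_add]
    _ = δ⁺ := by rw [hPC, hPδ', zero_add]

theorem map_negPart_of_map_eq_self (hT : IsPosMap T) (hTtr : IsTracePreserving T) {δ : Mn n}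
    (hδ : IsSelfAdjoint δ) (hfix : T δ = δ) : T δ⁻ = δ⁻ := by
  rw [← CFC.posPart_neg]
  exact hT.map_posPart_of_map_eq_self hTtr hδ.neg (by rw [map_neg, hfix])

end IsPosMap

section Corner

variable {n : ℕ} {T : Module.End ℂ (Mn n)} {P : Mn n}

theorem sandwich_comp_comp_sandwich (hP : IsStarProjection P)
    (hinv : ∀ X, 0 ≤ X → P * X * P = X → P * T X * P = T X) :
    sandwich P ∘ₗ T ∘ₗ sandwich P = T ∘ₗ sandwich P := by
  refine LinearMap.ext_on CStarAlgebra.span_nonneg fun X (hX : 0 ≤ X) => ?_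
  have hPXP : 0 ≤ P * X * P := by
    simpa [hP.isSelfAdjoint.star_eq] using star_left_conjugate_nonneg hX P
  simp only [LinearMap.comp_apply, sandwich_apply]
  refine hinv _ hPXP ?_
  simp only [← mul_assoc, hP.isIdempotentElem.eq]
  simp only [mul_assoc, hP.isIdempotentElem.eq]

theorem exists_ne_zero_fixed_of_corner (hTtr : IsTracePreserving T) (hP : IsStarProjection P)
    (hP0 : P ≠ 0) (hinv : sandwich P ∘ₗ T ∘ₗ sandwich P = T ∘ₗ sandwich P) :
    ∃ X, X ≠ 0 ∧ P * X * P = X ∧ T X = X := by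
  have hinv' (Y : Mn n) : sandwich P (T (sandwich P Y)) = T (sandwich P Y) :=
    LinearMap.congr_fun hinv Y
  -- `Y ↦ tr (P Y P)` is a nonzero functional invariant under `T ∘ sandwich P`
  obtain ⟨X, hX0, hX⟩ := (T ∘ₗ sandwich P).exists_ne_zero_apply_eq_self
    (Matrix.traceLinearMap (Fin n) ℂ ℂ ∘ₗ sandwich P)
    (LinearMap.ext fun Y => by simpa [hinv'] using hTtr _) fun h => hP.trace_ne_zero hP0 <| by
      simpa [sandwich_apply, hP.isIdempotentElem.eq] using LinearMap.congr_fun h P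
  simp only [LinearMap.comp_apply] at hX
  have hXP : P * X * P = X := by rw [← sandwich_apply, ← hX, hinv']
  exact ⟨X, hX0, hXP, by rw [← sandwich_apply] at hXP; nth_rewrite 1 [← hXP]; exact hX⟩

theorem IsPosMap.exists_nonneg_fixed_of_corner (hT : IsPosMap T) (hTtr : IsTracePreserving T)
    (hP : IsStarProjection P) {X : Mn n} (hX0 : X ≠ 0) (hXP : P * X * P = X) (hTX : T X = X) :
    ∃ s, 0 ≤ s ∧ s ≠ 0 ∧ P * s * P = s ∧ T s = s := by
  let S : Submodule ℂ (Mn n) := (sandwich P).eqLocus 1 ⊓ T.eqLocus 1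
  have hmem (Y : Mn n) : Y ∈ S ↔ P * Y * P = Y ∧ T Y = Y := by
    simp [S, sandwich_apply]
  have hS : ∀ Y ∈ S, star Y ∈ S := by
    simp only [hmem]
    rintro Y ⟨hYP, hYT⟩
    refine ⟨?_, by rw [hT.map_star, hYT]⟩
    conv_rhs => rw [← hYP]
    simp [star_mul, hP.isSelfAdjoint.star_eq, mul_assoc]
  obtain ⟨d, hdS, hd, hd0⟩ := S.exists_isSelfAdjoint_ne_zero hS ((hmem X).mpr ⟨hXP, hTX⟩) hX0
  obtain ⟨hdP, hdT⟩ := (hmem d).mp hdS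
  by_cases hpos : d⁺ = 0
  · refine ⟨d⁻, CFC.negPart_nonneg d, fun hneg => hd0 ?_, hP.mul_negPart_mul hd hdP,
      hT.map_negPart_of_map_eq_self hTtr hd hdT⟩
    rw [← CFC.posPart_sub_negPart d hd, hpos, hneg, sub_zero]
  · exact ⟨d⁺, CFC.posPart_nonneg d, hpos, hP.mul_posPart_mul hd hdP,
      hT.map_posPart_of_map_eq_self hTtr hd hdT⟩

theorem IsPosMap.exists_state_fixed_of_corner (hT : IsPosMap T) (hTtr : IsTracePreserving T)
    (hP : IsStarProjection P) (hP0 : P ≠ 0)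
    (hinv : ∀ X, 0 ≤ X → P * X * P = X → P * T X * P = T X) :
    ∃ s, 0 ≤ s ∧ s.trace = 1 ∧ P * s * P = s ∧ T s = s := by
  obtain ⟨X, hX0, hXP, hTX⟩ :=
    exists_ne_zero_fixed_of_corner hTtr hP hP0 (sandwich_comp_comp_sandwich hP hinv)
  obtain ⟨s, hs, hs0, hsP, hTs⟩ := hT.exists_nonneg_fixed_of_corner hTtr hP hX0 hXP hTX
  have htr : 0 ≤ s.trace.re :=
    (Complex.nonneg_iff.mp (Matrix.nonneg_iff_posSemidef.mp hs).trace_nonneg).1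
  refine ⟨(s.trace.re)⁻¹ • s, smul_nonneg (inv_nonneg.mpr htr) hs,
    Matrix.trace_re_inv_smul hs hs0, ?_, ?_⟩
  · rw [mul_smul_comm, smul_mul_assoc, hsP]
  · rw [LinearMap.map_smul_of_tower, hTs]

end Corner

namespace IsPosMap

variable {n : ℕ} {T : Module.End ℂ (Mn n)}

theorem mul_map_mul_eq_of_smul_map_le (hT : IsPosMap T) {σ P : Mn n} {p c : ℝ} (hp : 0 < p)
    (hpσ : p • T σ ≤ σ) (hP : IsStarProjection P) (hσP : P * σ * P = σ) (hc : 0 < c)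
    (hcP : c • P ≤ σ) {X : Mn n} (hX : 0 ≤ X) (hXP : P * X * P = X) :
    P * T X * P = T X := by
  set t := X.trace.re
  have ht : 0 ≤ t := (Complex.nonneg_iff.mp (Matrix.nonneg_iff_posSemidef.mp hX).trace_nonneg).1
  have hXσ : X ≤ (t / c) • σ := calc
    X ≤ t • P := hP.le_trace_re_smul hX hXP
    _ = (t / c) • (c • P) := by rw [smul_smul, div_mul_cancel₀ _ hc.ne']
    _ ≤ (t / c) • σ := smul_le_smul_of_nonneg_left hcP (by positivity)
  have hTXσ : T X ≤ (t / c / p) • σ := calc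
    T X ≤ (t / c) • T σ := by simpa using hT.monotone_s13 hXσ
    _ = (t / c / p) • (p • T σ) := by rw [smul_smul, div_mul_cancel₀ _ hp.ne']
    _ ≤ (t / c / p) • σ := smul_le_smul_of_nonneg_left hpσ (by positivity)
  have hQσ : (1 - P) * ((t / c / p) • σ) = 0 := by
    have hσ : IsSelfAdjoint σ := .of_nonneg ((smul_nonneg hc.le hP.nonneg).trans hcP)
    rw [mul_smul_comm, (hP.mul_mul_eq_self_iff hσ).mp hσP, smul_zero]
  exact (hP.mul_mul_eq_self_iff (IsSelfAdjoint.of_nonneg (hT.map_nonneg hX))).mpr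
    (Matrix.mul_eq_zero_of_le (hT.map_nonneg hX) hTXσ hP.one_sub hQσ)

theorem exists_pos_smul_le_of_smul_map_le (hT : IsPosMap T) (hTtr : IsTracePreserving T)
    {ρ : Mn n} (hρuniq : ∀ σ : Mn n, σ.PosSemidef → σ.trace = 1 → T σ = σ → σ = ρ)
    {σ : Mn n} (hσ : 0 ≤ σ) (hσ0 : σ ≠ 0) {p : ℝ} (hp : 0 < p) (hpσ : p • T σ ≤ σ) :
    ∃ c : ℝ, 0 < c ∧ c • ρ ≤ σ := by
  obtain ⟨P, hP, hσP, c, hc, hcP⟩ := Matrix.exists_isStarProjection_support hσ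
  have hP0 : P ≠ 0 := by
    rintro rfl
    exact hσ0 (by simpa using hσP.symm)
  obtain ⟨s, hs, hstr, hsP, hTs⟩ := hT.exists_state_fixed_of_corner hTtr hP hP0
    fun X hX hXP => hT.mul_map_mul_eq_of_smul_map_le hp hpσ hP hσP hc hcP hX hXP
  obtain rfl := hρuniq s (Matrix.nonneg_iff_posSemidef.mp hs) hstr hTs
  refine ⟨c, hc, le_trans (smul_le_smul_of_nonneg_left ?_ hc.le) hcP⟩
  simpa [hstr] using hP.le_trace_re_smul hs hsP

theorem eq_zero_of_map_eq_self_of_trace_eq_zero (hT : IsPosMap T) (hTtr : IsTracePreserving T)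
    {ρ : Mn n} (hρ : 0 ≤ ρ) (hρ0 : ρ ≠ 0)
    (hdom : ∀ σ, 0 ≤ σ → σ ≠ 0 → T σ = σ → ∃ c : ℝ, 0 < c ∧ c • ρ ≤ σ)
    {δ : Mn n} (hδ : IsSelfAdjoint δ) (hfix : T δ = δ) (htr : δ.trace = 0) : δ = 0 := by
  by_contra hδ0
  have hparts : δ⁺ = 0 ↔ δ⁻ = 0 := by
    have htr' : δ⁺.trace = δ⁻.trace := by
      rw [← sub_eq_zero, ← Matrix.trace_sub, CFC.posPart_sub_negPart δ hδ, htr]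
    rw [← (Matrix.nonneg_iff_posSemidef.mp (CFC.posPart_nonneg δ)).trace_eq_zero_iff,
      ← (Matrix.nonneg_iff_posSemidef.mp (CFC.negPart_nonneg δ)).trace_eq_zero_iff, htr']
  have hboth (h₁ : δ⁺ = 0) (h₂ : δ⁻ = 0) : False :=
    hδ0 (by rw [← CFC.posPart_sub_negPart δ hδ, h₁, h₂, sub_zero])
  obtain ⟨c₁, hc₁, h₁⟩ := hdom δ⁺ (CFC.posPart_nonneg δ) (fun h => hboth h (hparts.mp h))
    (hT.map_posPart_of_map_eq_self hTtr hδ hfix)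
  obtain ⟨c₂, hc₂, h₂⟩ := hdom δ⁻ (CFC.negPart_nonneg δ) (fun h => hboth (hparts.mpr h) h)
    (hT.map_negPart_of_map_eq_self hTtr hδ hfix)
  have hρρ : 0 < (ρ * ρ).trace := by
    have h := (Matrix.trace_conjTranspose_mul_self_eq_zero_iff (A := ρ)).not.mpr hρ0
    rw [← Matrix.star_eq_conjTranspose, (IsSelfAdjoint.of_nonneg hρ).star_eq] at h
    exact lt_of_le_of_ne (Matrix.trace_mul_nonneg hρ hρ) (Ne.symm h)
  -- `δ⁺ δ⁻ = 0`, yet both parts dominate a multiple of `ρ`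
  refine (mul_pos (by exact_mod_cast mul_pos hc₁ hc₂ : (0 : ℂ) < (c₁ * c₂ : ℝ)) hρρ).not_ge ?_
  calc ((c₁ * c₂ : ℝ) : ℂ) * (ρ * ρ).trace = ((c₁ • ρ) * (c₂ • ρ)).trace := by
        simp only [smul_mul_smul_comm, Matrix.trace_smul, Complex.real_smul, Complex.ofReal_mul]
    _ ≤ (δ⁺ * (c₂ • ρ)).trace := Matrix.trace_mul_le_trace_mul h₁ (smul_nonneg hc₂.le hρ)
    _ ≤ (δ⁺ * δ⁻).trace := by
        rw [Matrix.trace_mul_comm δ⁺, Matrix.trace_mul_comm δ⁺]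
        exact Matrix.trace_mul_le_trace_mul h₂ (CFC.posPart_nonneg δ)
    _ = 0 := by rw [CFC.posPart_mul_negPart, Matrix.trace_zero]

end IsPosMap

section Mixture

variable {n : ℕ} {M M' : Module.End ℂ (Mn n)} {p : ℝ}

theorem mixture_apply (X : Mn n) :
    ((p : ℂ) • M + ((1 : ℂ) - (p : ℂ)) • M') X = p • M X + (1 - p) • M' X := by
  rw [LinearMap.add_apply, LinearMap.smul_apply, LinearMap.smul_apply, ← Complex.coe_smul,
    ← Complex.coe_smul]
  push_cast
  rfl

theorem IsPosMap.mixture (hM : IsPosMap M) (hM' : IsPosMap M') (hp0 : 0 ≤ p) (hp1 : p ≤ 1) :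
    IsPosMap ((p : ℂ) • M + ((1 : ℂ) - (p : ℂ)) • M') :=
  isPosMap_iff.mpr fun X hX => by
    rw [mixture_apply]
    exact add_nonneg (smul_nonneg hp0 (hM.map_nonneg hX))
      (smul_nonneg (sub_nonneg.mpr hp1) (hM'.map_nonneg hX))

theorem IsTracePreserving.mixture (hM : IsTracePreserving M) (hM' : IsTracePreserving M') :
    IsTracePreserving ((p : ℂ) • M + ((1 : ℂ) - (p : ℂ)) • M') := fun X => by
  rw [mixture_apply, Matrix.trace_add, Matrix.trace_smul, Matrix.trace_smul, hM, hM', ← add_smul,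
    add_sub_cancel, one_smul]

theorem IsPosMap.smul_le_mixture_apply (hM' : IsPosMap M') (hp1 : p ≤ 1) {X : Mn n}
    (hX : 0 ≤ X) : p • M X ≤ ((p : ℂ) • M + ((1 : ℂ) - (p : ℂ)) • M') X := by
  rw [mixture_apply]
  exact le_add_of_nonneg_right (smul_nonneg (sub_nonneg.mpr hp1) (hM'.map_nonneg hX))

end Mixture

namespace IsChannel

variable {n : ℕ} {T : Module.End ℂ (Mn n)}

theorem isPosMap (hT : IsChannel T) : IsPosMap T := by
  obtain ⟨k, V, hV, -⟩ := hT
  refine isPosMap_iff.mpr fun X hX => ?_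
  rw [hV]
  exact Finset.sum_nonneg fun i _ => star_right_conjugate_nonneg hX (V i)

theorem isTracePreserving (hT : IsChannel T) : IsTracePreserving T := by
  obtain ⟨k, V, hV, hVsum⟩ := hT
  intro X
  calc (T X).trace = ∑ i, ((V i)ᴴ * V i * X).trace := by
        simp only [hV, Matrix.trace_sum, Matrix.trace_mul_cycle _ X]
    _ = X.trace := by rw [← Matrix.trace_sum, ← Finset.sum_mul, hVsum, one_mul]

end IsChannel

theorem stmt13_general {n : ℕ} (M M' : Module.End ℂ (Mn n))
    (hM : IsChannel M) (hM' : IsChannel M')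
    (ρstar : Mn n) (hρpsd : ρstar.PosSemidef) (hρtr : ρstar.trace = 1)
    (hρuniq : ∀ σ : Mn n, σ.PosSemidef → σ.trace = 1 → M σ = σ → σ = ρstar)
    (p : ℝ) (hp0 : 0 < p) (hp1 : p ≤ 1)
    (Mp : Module.End ℂ (Mn n)) (hMp : Mp = (p : ℂ) • M + ((1 : ℂ) - (p : ℂ)) • M') :
    ∃ ρp : Mn n,
      (ρp.PosSemidef ∧ ρp.trace = 1 ∧ Mp ρp = ρp) ∧
      (∀ σ : Mn n, σ.PosSemidef → σ.trace = 1 → Mp σ = σ → σ = ρp) ∧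
      (∃ c : ℝ, 0 < c ∧ c ≤ 1 ∧ ∃ σp : Mn n, σp.PosSemidef ∧ σp.trace = 1 ∧
        ρp = (c : ℂ) • ρstar + ((1 : ℂ) - (c : ℂ)) • σp) := by
  have hρ := Matrix.nonneg_iff_posSemidef.mpr hρpsd
  have hρ0 : ρstar ≠ 0 := by rintro rfl; simp at hρtr
  have : Nontrivial (Mn n) := ⟨⟨ρstar, 0, hρ0⟩⟩
  have hMppos : IsPosMap Mp := by rw [hMp]; exact hM.isPosMap.mixture hM'.isPosMap hp0.le hp1
  have hMptr : IsTracePreserving Mp := by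
    rw [hMp]; exact hM.isTracePreserving.mixture hM'.isTracePreserving
  have hdom (σ : Mn n) (hσ : 0 ≤ σ) (hσ0 : σ ≠ 0) (hfix : Mp σ = σ) :
      ∃ c : ℝ, 0 < c ∧ c • ρstar ≤ σ := by
    refine hM.isPosMap.exists_pos_smul_le_of_smul_map_le hM.isTracePreserving hρuniq hσ hσ0 hp0 ?_
    calc p • M σ ≤ Mp σ := by rw [hMp]; exact hM'.isPosMap.smul_le_mixture_apply hp1 hσ
      _ = σ := hfix
  obtain ⟨ρp, hρp, hρptr, -, hρpfix⟩ :=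
    hMppos.exists_state_fixed_of_corner hMptr (.one _) one_ne_zero fun X _ _ => by simp
  have hρp0 : ρp ≠ 0 := by rintro rfl; simp at hρptr
  refine ⟨ρp, ⟨Matrix.nonneg_iff_posSemidef.mp hρp, hρptr, hρpfix⟩, fun σ hσ hσtr hσfix => ?_, ?_⟩
  · refine sub_eq_zero.mp (hMppos.eq_zero_of_map_eq_self_of_trace_eq_zero hMptr hρ hρ0 hdom
      (hσ.isHermitian.isSelfAdjoint.sub (.of_nonneg hρp)) ?_ ?_)
    · rw [map_sub, hσfix, hρpfix]
    · rw [Matrix.trace_sub, hσtr, hρptr, sub_self]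
  · obtain ⟨c, hc, hcρ⟩ := hdom ρp hρp hρp0 hρpfix
    exact Matrix.exists_eq_smul_add_smul_of_smul_le hρ hρtr hρptr hc hcρ

/-- (Burgarth et al.) If `M` is an ergodic quantum channel with unique
invariant state `ρ_*` and `M'` is any quantum channel, then for every `p ∈ (0,1]` the
randomization `M_p = pM + (1−p)M'` is ergodic, and its unique invariant state satisfies
`ρ_{*,p} = π_p ρ_* + (1−π_p)σ_p` for some `π_p ∈ (0,1]` and some state `σ_p`. -/
theorem stmt13 {n : ℕ} (M M' : Module.End ℂ (Mn n))
    (hM : IsChannel M) (hM' : IsChannel M')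
    (ρstar : Mn n) (hρpsd : ρstar.PosSemidef) (hρtr : ρstar.trace = 1)
    (hρfix : M ρstar = ρstar)
    (hρuniq : ∀ σ : Mn n, σ.PosSemidef → σ.trace = 1 → M σ = σ → σ = ρstar)
    (p : ℝ) (hp0 : 0 < p) (hp1 : p ≤ 1)
    (Mp : Module.End ℂ (Mn n)) (hMp : Mp = (p : ℂ) • M + ((1 : ℂ) - (p : ℂ)) • M') :
    ∃ ρp : Mn n,
      (ρp.PosSemidef ∧ ρp.trace = 1 ∧ Mp ρp = ρp) ∧
      (∀ σ : Mn n, σ.PosSemidef → σ.trace = 1 → Mp σ = σ → σ = ρp) ∧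
      (∃ c : ℝ, 0 < c ∧ c ≤ 1 ∧ ∃ σp : Mn n, σp.PosSemidef ∧ σp.trace = 1 ∧
        ρp = (c : ℂ) • ρstar + ((1 : ℂ) - (c : ℂ)) • σp) :=
  stmt13_general M M' hM hM' ρstar hρpsd hρtr hρuniq p hp0 hp1 Mp hMp
end
end
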